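/- arXiv:0907.0744 — 2 statements merged into one kernel-verified Lean document; each statement's English description precedes it below -/
import Mathlib

section
/- Let Ω ⊂ ℂ be open, ν : Ω → ℝ continuously differentiable with |ν(z)| < 1 for all z ∈ Ω, and set σ = (1−ν)/(1+ν) and α = (∂̄σ)/(2σ), where ∂̄ = (∂ₓ + i∂_y)/2. Let f = u + iv : Ω → ℂ be continuously differentiable with u, v real-valued, and define w := σ^{1/2} u + i σ^{−1/2} v. Then f satisfies the conjugate Beltrami equation ∂̄f = ν · conj(∂f) at a point z ∈ Ω if and only if w satisfies ∂̄w = α · conj(w) at z. Moreover w = (f − ν·conj(f))/√(1−ν²). -/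
/-!
For real `g`, `conj (∂ g) = ∂̄ g`; hence for `f = u + i v`,
`∂̄f - ν conj (∂f) = (1 - ν) ∂̄u + i (1 + ν) ∂̄v = (1 + ν) (σ ∂̄u + i ∂̄v)`.
For `w = s u + i s⁻¹ v` with `s = σ^{1/2}`, the Leibniz rule gives
`∂̄w = s ∂̄u + i s⁻¹ ∂̄v + (∂̄s / s) (s u - i s⁻¹ v)` and `∂̄s / s = ∂̄σ / (2σ) = α`, so
`∂̄w - α conj w = (σ ∂̄u + i ∂̄v) / s`. Both equations therefore say `σ ∂̄u + i ∂̄v = 0`.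
The closed formula for `w` comes from `f - ν conj f = (1 - ν) u + i (1 + ν) v` and
`σ^{1/2} = (1 - ν) / √(1 - ν²)`.
-/

/-- Wirtinger derivative ∂ = (∂ₓ − i∂_y)/2. -/
noncomputable def wdz (f : ℂ → ℂ) (z : ℂ) : ℂ :=
  (fderiv ℝ f z 1 - Complex.I * fderiv ℝ f z Complex.I) / 2

/-- Wirtinger derivative ∂̄ = (∂ₓ + i∂_y)/2. -/
noncomputable def wdzbar (f : ℂ → ℂ) (z : ℂ) : ℂ :=
  (fderiv ℝ f z 1 + Complex.I * fderiv ℝ f z Complex.I) / 2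

open Complex ComplexConjugate Real

section Wirtinger

variable {z : ℂ} {f g : ℂ → ℂ} {u v σ : ℂ → ℝ}

theorem HasFDerivAt.wdzbar_eq {L : ℂ →L[ℝ] ℂ} (hf : HasFDerivAt f L z) :
    wdzbar f z = (L 1 + I * L I) / 2 := by
  rw [wdzbar, hf.fderiv]

theorem wdzbar_add (hf : DifferentiableAt ℝ f z) (hg : DifferentiableAt ℝ g z) :
    wdzbar (fun ζ => f ζ + g ζ) z = wdzbar f z + wdzbar g z := by
  simp only [wdzbar, fderiv_fun_add hf hg, add_apply]
  ring

theorem wdzbar_mul (hf : DifferentiableAt ℝ f z) (hg : DifferentiableAt ℝ g z) :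
    wdzbar (fun ζ => f ζ * g ζ) z = f z * wdzbar g z + wdzbar f z * g z := by
  simp only [wdzbar, fderiv_fun_mul hf hg, add_apply, smul_apply, smul_eq_mul]
  ring

theorem wdzbar_mul_const (hf : DifferentiableAt ℝ f z) (c : ℂ) :
    wdzbar (fun ζ => f ζ * c) z = wdzbar f z * c := by
  simp only [wdzbar, fderiv_mul_const hf, smul_apply, smul_eq_mul]
  ring

theorem wdzbar_conj_comp (f : ℂ → ℂ) (z : ℂ) :
    wdzbar (fun ζ => conj (f ζ)) z = conj (wdz f z) := by
  have : fderiv ℝ (fun ζ => conj (f ζ)) z = (conjCLE : ℂ →L[ℝ] ℂ).comp (fderiv ℝ f z) :=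
    conjCLE.comp_fderiv
  simp [wdzbar, wdz, this, map_ofNat]

theorem HasFDerivAt.wdzbar_ofReal {g : ℂ → ℝ} {L : ℂ →L[ℝ] ℝ} (hg : HasFDerivAt g L z) :
    wdzbar (fun ζ => (g ζ : ℂ)) z = ((L 1 : ℂ) + I * L I) / 2 := by
  have h : HasFDerivAt (fun ζ => (g ζ : ℂ)) (ofRealCLM.comp L) z :=
    ofRealCLM.hasFDerivAt.comp z hg
  simp [h.wdzbar_eq]

theorem wdzbar_ofReal_comp {g : ℂ → ℝ} {φ : ℝ → ℝ} {φ' : ℝ} (hφ : HasDerivAt φ φ' (g z))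
    (hg : DifferentiableAt ℝ g z) :
    wdzbar (fun ζ => (φ (g ζ) : ℂ)) z = φ' * wdzbar (fun ζ => (g ζ : ℂ)) z := by
  rw [HasFDerivAt.wdzbar_ofReal (g := fun ζ => φ (g ζ)) (hφ.comp_hasFDerivAt z hg.hasFDerivAt),
    hg.hasFDerivAt.wdzbar_ofReal]
  simp only [smul_apply, smul_eq_mul, ofReal_mul]
  ring

theorem DifferentiableAt.ofReal_comp (hu : DifferentiableAt ℝ u z) :
    DifferentiableAt ℝ (fun ζ => (u ζ : ℂ)) z :=
  ofRealCLM.differentiableAt.comp z hu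

theorem wdzbar_ofReal_add_ofReal_mul (hu : DifferentiableAt ℝ u z) (hv : DifferentiableAt ℝ v z)
    (c : ℂ) : wdzbar (fun ζ => (u ζ : ℂ) + (v ζ : ℂ) * c) z =
      wdzbar (fun ζ => (u ζ : ℂ)) z + wdzbar (fun ζ => (v ζ : ℂ)) z * c := by
  rw [wdzbar_add hu.ofReal_comp (hv.ofReal_comp.mul_const c),
    wdzbar_mul_const hv.ofReal_comp]

theorem wdzbar_sub_mul_conj_wdz_eq (hu : DifferentiableAt ℝ u z) (hv : DifferentiableAt ℝ v z)
    {f : ℂ → ℂ} (hf : ∀ ζ, f ζ = (u ζ : ℂ) + (v ζ : ℂ) * I) (n : ℂ) :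
    wdzbar f z - n * conj (wdz f z) =
      (1 - n) * wdzbar (fun ζ => (u ζ : ℂ)) z + (1 + n) * (wdzbar (fun ζ => (v ζ : ℂ)) z * I) := by
  have hconj : (fun ζ => conj ((u ζ : ℂ) + (v ζ : ℂ) * I)) =
      fun ζ => (u ζ : ℂ) + (v ζ : ℂ) * -I := by
    funext ζ; simp
  rw [funext hf, ← wdzbar_conj_comp, hconj, wdzbar_ofReal_add_ofReal_mul hu hv,
    wdzbar_ofReal_add_ofReal_mul hu hv]
  ring

theorem wdzbar_sub_mul_conj_eq (hσ : DifferentiableAt ℝ σ z) (hσz : 0 < σ z)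
    (hu : DifferentiableAt ℝ u z) (hv : DifferentiableAt ℝ v z) {w : ℂ → ℂ}
    (hw : ∀ ζ, w ζ = ((√(σ ζ) * u ζ : ℝ) : ℂ) + (((√(σ ζ))⁻¹ * v ζ : ℝ) : ℂ) * I) :
    wdzbar w z - wdzbar (fun ζ => (σ ζ : ℂ)) z / (2 * σ z) * conj (w z) =
      (σ z * wdzbar (fun ζ => (u ζ : ℂ)) z + wdzbar (fun ζ => (v ζ : ℂ)) z * I) / √(σ z) := by
  have hs : DifferentiableAt ℝ (fun ζ => √(σ ζ)) z := hσ.sqrt hσz.ne'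
  have hs_pos : 0 < √(σ z) := sqrt_pos.mpr hσz
  have hsi : DifferentiableAt ℝ (fun ζ => (√(σ ζ))⁻¹) z := hs.inv hs_pos.ne'
  have hds : wdzbar (fun ζ => (√(σ ζ) : ℂ)) z =
      (1 / (2 * √(σ z)) : ℝ) * wdzbar (fun ζ => (σ ζ : ℂ)) z :=
    wdzbar_ofReal_comp (φ := fun t => √t) (hasDerivAt_sqrt hσz.ne') hσ
  have hdsi : wdzbar (fun ζ => ((√(σ ζ))⁻¹ : ℝ)) z =
      (-(1 / (2 * √(σ z))) / √(σ z) ^ 2 : ℝ) * wdzbar (fun ζ => (σ ζ : ℂ)) z :=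
    wdzbar_ofReal_comp (φ := fun t => (√t)⁻¹) ((hasDerivAt_sqrt hσz.ne').inv hs_pos.ne') hσ
  have hsq : ((√(σ z) : ℝ) : ℂ) ^ 2 = σ z := by exact_mod_cast sq_sqrt hσz.le
  have hs_ne : ((√(σ z) : ℝ) : ℂ) ≠ 0 := ofReal_ne_zero.mpr hs_pos.ne'
  simp only [funext hw, ofReal_mul]
  rw [wdzbar_add (hs.ofReal_comp.fun_mul hu.ofReal_comp)
      ((hsi.ofReal_comp.fun_mul hv.ofReal_comp).mul_const I),
    wdzbar_mul_const (hsi.ofReal_comp.fun_mul hv.ofReal_comp),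
    wdzbar_mul hs.ofReal_comp hu.ofReal_comp, wdzbar_mul hsi.ofReal_comp hv.ofReal_comp, hds, hdsi]
  simp only [map_add, map_mul, conj_ofReal, conj_I, ← hsq]
  push_cast
  field_simp
  ring

end Wirtinger

theorem ofReal_sqrt_mul_add_inv_sqrt_mul_I {n : ℝ} (hn : |n| < 1) (x y : ℝ) :
    ((√((1 - n) / (1 + n)) * x : ℝ) : ℂ) + (((√((1 - n) / (1 + n)))⁻¹ * y : ℝ) : ℂ) * I =
      ((x : ℂ) + y * I - n * conj ((x : ℂ) + y * I)) / (√(1 - n ^ 2) : ℝ) := by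
  obtain ⟨h1p, h1m⟩ : 0 < 1 + n ∧ 0 < 1 - n := by constructor <;> linarith [abs_lt.mp hn]
  set s := √((1 - n) / (1 + n))
  have hs_pos : 0 < s := sqrt_pos.mpr (div_pos h1m h1p)
  have hsq : s ^ 2 * (1 + n) = 1 - n := by
    rw [sq_sqrt (div_pos h1m h1p).le]; field_simp
  have hsqrt : √(1 - n ^ 2) = s * (1 + n) := by
    rw [← sqrt_sq (mul_pos hs_pos h1p).le]
    congr 1
    linear_combination -(1 + n) * hsq
  have hsqC : (s : ℂ) ^ 2 * (1 + n) = 1 - n := by exact_mod_cast hsq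
  have hs_ne : (s : ℂ) ≠ 0 := ofReal_ne_zero.mpr hs_pos.ne'
  have h1p_ne : (1 + n : ℂ) ≠ 0 := by exact_mod_cast h1p.ne'
  rw [hsqrt]
  simp only [map_add, map_mul, conj_ofReal, conj_I]
  push_cast
  field_simp
  linear_combination (x : ℂ) * hsqC

theorem stmt_2 (Ω : Set ℂ) (hΩ : IsOpen Ω) (ν u v : ℂ → ℝ)
    (hν : ContDiffOn ℝ 1 ν Ω) (hν1 : ∀ z ∈ Ω, |ν z| < 1)
    (hu : ContDiffOn ℝ 1 u Ω) (hv : ContDiffOn ℝ 1 v Ω)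
    (σ : ℂ → ℝ) (hσ : ∀ z, σ z = (1 - ν z) / (1 + ν z))
    (α f w : ℂ → ℂ)
    (hα : ∀ z, α z = wdzbar (fun ζ => (σ ζ : ℂ)) z / (2 * (σ z : ℂ)))
    (hf : ∀ z, f z = (u z : ℂ) + (v z : ℂ) * Complex.I)
    (hw : ∀ z, w z = ((Real.sqrt (σ z) * u z : ℝ) : ℂ) +
      (((Real.sqrt (σ z))⁻¹ * v z : ℝ) : ℂ) * Complex.I)
    (z : ℂ) (hz : z ∈ Ω) :
    (wdzbar f z = (ν z : ℂ) * (starRingEnd ℂ) (wdz f z) ↔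
      wdzbar w z = α z * (starRingEnd ℂ) (w z)) ∧
    w z = (f z - (ν z : ℂ) * (starRingEnd ℂ) (f z)) /
      ((Real.sqrt (1 - (ν z) ^ 2) : ℝ) : ℂ) := by
  have hdiff {g : ℂ → ℝ} (hg : ContDiffOn ℝ 1 g Ω) : DifferentiableAt ℝ g z :=
    (hg.contDiffAt (hΩ.mem_nhds hz)).differentiableAt one_ne_zero
  obtain ⟨h1p, h1m⟩ : 0 < 1 + ν z ∧ 0 < 1 - ν z := by
    constructor <;> linarith [abs_lt.mp (hν1 z hz)]
  have hσd : DifferentiableAt ℝ σ z := by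
    have hνd := hdiff hν
    rw [funext hσ]
    fun_prop (disch := exact h1p.ne')
  have hσz : 0 < σ z := hσ z ▸ div_pos h1m h1p
  have hσC : (1 - ν z : ℂ) = (1 + ν z) * σ z := by
    rw [hσ z]; push_cast; field_simp [show (1 + ν z : ℂ) ≠ 0 by exact_mod_cast h1p.ne']
  refine ⟨?_, by rw [hw, hf, hσ]; exact ofReal_sqrt_mul_add_inv_sqrt_mul_I (hν1 z hz) _ _⟩
  rw [← sub_eq_zero (a := wdzbar f z), wdzbar_sub_mul_conj_wdz_eq (hdiff hu) (hdiff hv) hf,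
    ← sub_eq_zero (a := wdzbar w z), hα,
    wdzbar_sub_mul_conj_eq hσd hσz (hdiff hu) (hdiff hv) hw, hσC, div_eq_zero_iff,
    or_iff_left (ofReal_ne_zero.mpr (sqrt_pos.mpr hσz).ne'), mul_assoc, ← mul_add, mul_eq_zero,
    or_iff_right (by exact_mod_cast h1p.ne')]
end

section
/- Let α ∈ L^∞ of the open unit disk 𝔻, let r : ℂ → ℂ be measurable with |r| ≤ ‖α‖_∞ pointwise and r = 0 outside 𝔻, and define for z ∈ ℂ: s(z) = (1/(2πi)) ∬_𝔻 [ r(ζ)/(ζ−z) + z·conj(r(ζ))/(1−conj(ζ)z) ] dζ∧dζ̄. Then |s(z)| ≤ 4‖α‖_{L^∞(𝔻)} for all z ∈ ℂ. -/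
/-!
Write `M` for the essential supremum of `α`. The reflection identity
`z / (1 - conj ζ * z) = -(conj (ζ - (conj z)⁻¹))⁻¹` bounds the integrand by
`M * (|ζ - z|⁻¹ + |ζ - (conj z)⁻¹|⁻¹)`. Among discs of a fixed radius `R`, the integral of
`|ζ - a|⁻¹` is largest over the disc centred at `a`: trading the part of another disc outside
`ball a R` for the part of `ball a R` outside it exchanges sets of equal area on which
`|ζ - a|⁻¹ ≤ 1 / R` for ones on which `|ζ - a|⁻¹ ≥ 1 / R`. In polar coordinates that maximal
value is `2πR`, so each kernel contributes at most `2π` over the unit disc, and the prefactor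
`|(2πi)⁻¹ (-2i)| = 1/π` gives the bound `4M`.
-/

open MeasureTheory ENNReal Set Metric ComplexConjugate
open scoped Real

theorem enorm_inv_le {𝕜 : Type*} [NormedDivisionRing 𝕜] (a : 𝕜) : ‖a⁻¹‖ₑ ≤ ‖a‖ₑ⁻¹ := by
  rcases eq_or_ne a 0 with rfl | ha
  · simp
  · rw [enorm_inv ha]

theorem setLIntegral_le_setLIntegral_of_measure_eq {X : Type*} [MeasurableSpace X] {μ : Measure X}
    {E B : Set X} {f : X → ℝ≥0∞} (c : ℝ≥0∞) (hE : MeasurableSet E) (hB : MeasurableSet B)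
    (hμ : μ E = μ B) (hfin : μ E ≠ ∞)
    (hle : ∀ x ∈ E \ B, f x ≤ c) (hge : ∀ x ∈ B \ E, c ≤ f x) :
    ∫⁻ x in E, f x ∂μ ≤ ∫⁻ x in B, f x ∂μ := by
  have hdiff : μ (E \ B) = μ (B \ E) := by
    have hfin' : μ (E ∩ B) ≠ ∞ := measure_ne_top_of_subset inter_subset_left hfin
    refine (ENNReal.add_left_inj hfin').mp ?_
    rw [measure_sdiff_add_inter E hB, hμ, inter_comm, measure_sdiff_add_inter B hE]
  calc ∫⁻ x in E, f x ∂μ = ∫⁻ x in E ∩ B, f x ∂μ + ∫⁻ x in E \ B, f x ∂μ :=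
        (lintegral_inter_add_sdiff f E hB).symm
    _ ≤ ∫⁻ x in E ∩ B, f x ∂μ + ∫⁻ _ in E \ B, c ∂μ :=
        add_le_add le_rfl (setLIntegral_mono' (hE.diff hB) hle)
    _ = ∫⁻ x in B ∩ E, f x ∂μ + ∫⁻ _ in B \ E, c ∂μ := by
        rw [inter_comm, setLIntegral_const, setLIntegral_const, hdiff]
    _ ≤ ∫⁻ x in B ∩ E, f x ∂μ + ∫⁻ x in B \ E, f x ∂μ :=
        add_le_add le_rfl (setLIntegral_mono' (hB.diff hE) hge)
    _ = ∫⁻ x in B, f x ∂μ := lintegral_inter_add_sdiff f B hE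

theorem lintegral_ball_zero_enorm_inv (R : ℝ) :
    ∫⁻ z in ball (0 : ℂ) R, ‖z‖ₑ⁻¹ = ENNReal.ofReal (2 * π * R) := by
  have hpolar : ∀ p ∈ polarCoord.target, ENNReal.ofReal p.1 •
      (ball (0 : ℂ) R).indicator (fun z => ‖z‖ₑ⁻¹) (Complex.polarCoord.symm p) =
      (Iio R ×ˢ univ).indicator 1 p := by
    rintro ⟨ρ, θ⟩ ⟨hρ : 0 < ρ, -⟩
    have hnorm : ‖Complex.polarCoord.symm (ρ, θ)‖ = ρ := by
      rw [Complex.norm_polarCoord_symm, abs_of_pos hρ]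
    simp only [indicator, mem_ball_zero_iff, hnorm, mem_prod, mem_Iio, mem_univ, and_true]
    split_ifs
    · rw [← ofReal_norm, hnorm, smul_eq_mul, ENNReal.mul_inv_cancel] <;> simp [hρ]
    · simp
  have htarget : polarCoord.target ∩ Iio R ×ˢ univ = Ioo 0 R ×ˢ Ioo (-π) π := by
    rw [polarCoord_target, prod_inter_prod, Ioi_inter_Iio, inter_univ]
  rw [← lintegral_indicator measurableSet_ball, ← Complex.lintegral_comp_polarCoord_symm,
    setLIntegral_congr_fun polarCoord.open_target.measurableSet hpolar,
    lintegral_indicator_one (measurableSet_Iio.prod MeasurableSet.univ),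
    Measure.restrict_apply (measurableSet_Iio.prod MeasurableSet.univ), inter_comm, htarget,
    Measure.volume_eq_prod, Measure.prod_prod, Real.volume_Ioo, Real.volume_Ioo, mul_comm,
    ← ENNReal.ofReal_mul (by linarith [Real.pi_pos])]
  ring_nf

theorem lintegral_ball_enorm_sub_inv (a : ℂ) (R : ℝ) :
    ∫⁻ z in ball a R, ‖z - a‖ₑ⁻¹ = ENNReal.ofReal (2 * π * R) := by
  rw [← lintegral_ball_zero_enorm_inv R, ← lintegral_indicator measurableSet_ball,
    ← lintegral_indicator measurableSet_ball,
    ← lintegral_sub_right_eq_self ((ball 0 R).indicator fun z => ‖z‖ₑ⁻¹) a]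
  congr with z
  simp [indicator, dist_eq_norm]

theorem setLIntegral_ball_enorm_sub_inv_le (c a : ℂ) (R : ℝ) :
    ∫⁻ z in ball c R, ‖z - a‖ₑ⁻¹ ≤ ENNReal.ofReal (2 * π * R) := by
  rw [← lintegral_ball_enorm_sub_inv a R]
  refine setLIntegral_le_setLIntegral_of_measure_eq (ENNReal.ofReal R)⁻¹ measurableSet_ball
    measurableSet_ball (by rw [Complex.volume_ball, Complex.volume_ball]) measure_ball_lt_top.ne
    (fun z hz => ?_) (fun z hz => ?_)
  · have : R ≤ ‖z - a‖ := by simpa [dist_eq_norm] using hz.2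
    rw [← ofReal_norm]
    exact ENNReal.inv_le_inv.mpr (ENNReal.ofReal_le_ofReal this)
  · have : ‖z - a‖ ≤ R := by simpa [dist_eq_norm] using (mem_ball.mp hz.1).le
    rw [← ofReal_norm]
    exact ENNReal.inv_le_inv.mpr (ENNReal.ofReal_le_ofReal this)

theorem enorm_div_one_sub_conj_mul_le (z ζ : ℂ) :
    ‖z / (1 - conj ζ * z)‖ₑ ≤ ‖ζ - (conj z)⁻¹‖ₑ⁻¹ := by
  rcases eq_or_ne z 0 with rfl | hz
  · simp
  have hreflect : z / (1 - conj ζ * z) = -(conj (ζ - (conj z)⁻¹))⁻¹ := by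
    rw [map_sub, map_inv₀, Complex.conj_conj, ← inv_neg, neg_sub,
      show z⁻¹ - conj ζ = z⁻¹ * (1 - conj ζ * z) by field_simp, mul_inv, inv_inv, div_eq_mul_inv]
  rw [hreflect, enorm_neg, ← RCLike.enorm_conj (ζ - (conj z)⁻¹)]
  exact enorm_inv_le _

theorem enorm_cauchy_add_reflected_le (w z ζ : ℂ) :
    ‖w / (ζ - z) + z * conj w / (1 - conj ζ * z)‖ₑ ≤
      ‖w‖ₑ * (‖ζ - z‖ₑ⁻¹ + ‖ζ - (conj z)⁻¹‖ₑ⁻¹) := by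
  calc ‖w / (ζ - z) + z * conj w / (1 - conj ζ * z)‖ₑ
      ≤ ‖w‖ₑ * ‖(ζ - z)⁻¹‖ₑ + ‖w‖ₑ * ‖z / (1 - conj ζ * z)‖ₑ := by
        refine (enorm_add_le _ _).trans_eq ?_
        rw [mul_comm z, mul_div_assoc, div_eq_mul_inv, enorm_mul, enorm_mul, RCLike.enorm_conj]
    _ ≤ ‖w‖ₑ * ‖ζ - z‖ₑ⁻¹ + ‖w‖ₑ * ‖ζ - (conj z)⁻¹‖ₑ⁻¹ := by
        gcongr
        exacts [enorm_inv_le _, enorm_div_one_sub_conj_mul_le z ζ]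
    _ = ‖w‖ₑ * (‖ζ - z‖ₑ⁻¹ + ‖ζ - (conj z)⁻¹‖ₑ⁻¹) := (mul_add _ _ _).symm

theorem lintegral_unitBall_cauchy_add_reflected_le (z : ℂ) :
    ∫⁻ ζ in ball (0 : ℂ) 1, (‖ζ - z‖ₑ⁻¹ + ‖ζ - (conj z)⁻¹‖ₑ⁻¹) ≤ ENNReal.ofReal (4 * π) := by
  rw [lintegral_add_left (by fun_prop)]
  calc _ ≤ ENNReal.ofReal (2 * π * 1) + ENNReal.ofReal (2 * π * 1) :=
        add_le_add (setLIntegral_ball_enorm_sub_inv_le _ _ _)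
          (setLIntegral_ball_enorm_sub_inv_le _ _ _)
    _ = ENNReal.ofReal (4 * π) := by
        rw [← ENNReal.ofReal_add (by positivity) (by positivity)]
        ring_nf

theorem stmt_5_general (α r : ℂ → ℂ)
    (hr : ∀ ζ, (‖r ζ‖₊ : ℝ≥0∞) ≤
      eLpNormEssSup α (volume.restrict (Metric.ball (0:ℂ) 1)))
    (s : ℂ → ℂ)
    (hs : ∀ z, s z = (2 * (Real.pi : ℂ) * Complex.I)⁻¹ * ((-2) * Complex.I) *
      ∫ ζ in Metric.ball (0:ℂ) 1,
        (r ζ / (ζ - z) + z * (starRingEnd ℂ) (r ζ) / (1 - (starRingEnd ℂ) ζ * z))) :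
    ∀ z : ℂ, (‖s z‖₊ : ℝ≥0∞) ≤
      4 * eLpNormEssSup α (volume.restrict (Metric.ball (0:ℂ) 1)) := by
  intro z
  set M := eLpNormEssSup α (volume.restrict (ball (0:ℂ) 1))
  have hconst : (2 * (π : ℂ) * Complex.I)⁻¹ * ((-2) * Complex.I) = -(π : ℂ)⁻¹ := by
    field_simp
  have hpi : ‖(π : ℂ)⁻¹‖ₑ = ENNReal.ofReal π⁻¹ := by
    rw [← ofReal_norm, norm_inv, Complex.norm_real, Real.norm_of_nonneg Real.pi_pos.le]
  rw [← enorm_eq_nnnorm, hs z, hconst, enorm_mul, enorm_neg, hpi]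
  calc _ ≤ ENNReal.ofReal π⁻¹ * ∫⁻ ζ in ball (0 : ℂ) 1,
          ‖r ζ / (ζ - z) + z * conj (r ζ) / (1 - conj ζ * z)‖ₑ := by
        gcongr
        exact enorm_integral_le_lintegral_enorm _
    _ ≤ ENNReal.ofReal π⁻¹ * ∫⁻ ζ in ball (0 : ℂ) 1,
          M * (‖ζ - z‖ₑ⁻¹ + ‖ζ - (conj z)⁻¹‖ₑ⁻¹) := by
        gcongr with ζ
        exact (enorm_cauchy_add_reflected_le _ z ζ).trans
          (mul_le_mul_left (by simpa only [enorm_eq_nnnorm] using hr ζ) _)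
    _ ≤ ENNReal.ofReal π⁻¹ * (M * ENNReal.ofReal (4 * π)) := by
        rw [lintegral_const_mul M (by fun_prop)]
        gcongr
        exact lintegral_unitBall_cauchy_add_reflected_le z
    _ = 4 * M := by
        rw [mul_left_comm, ← ENNReal.ofReal_mul (by positivity),
          show π⁻¹ * (4 * π) = 4 by field_simp, ENNReal.ofReal_ofNat, mul_comm]

theorem stmt_5 (α r : ℂ → ℂ) (hmeas : Measurable r)
    (hr : ∀ ζ, (‖r ζ‖₊ : ℝ≥0∞) ≤
      eLpNormEssSup α (volume.restrict (Metric.ball (0:ℂ) 1)))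
    (hr0 : ∀ ζ ∉ Metric.ball (0:ℂ) 1, r ζ = 0)
    (s : ℂ → ℂ)
    (hs : ∀ z, s z = (2 * (Real.pi : ℂ) * Complex.I)⁻¹ * ((-2) * Complex.I) *
      ∫ ζ in Metric.ball (0:ℂ) 1,
        (r ζ / (ζ - z) + z * (starRingEnd ℂ) (r ζ) / (1 - (starRingEnd ℂ) ζ * z))) :
    ∀ z : ℂ, (‖s z‖₊ : ℝ≥0∞) ≤
      4 * eLpNormEssSup α (volume.restrict (Metric.ball (0:ℂ) 1)) :=
  stmt_5_general α r hr s hs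
end
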